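/- Let A be an m×n integer matrix, let U be an m×m integer matrix invertible over ℤ, and let V be an n×n integer matrix invertible over ℤ. Then for every i with 1 ≤ i ≤ min(m, n), the i-th determinant divisor of U·A·V equals the i-th determinant divisor of A: d_i(U·A·V) = d_i(A). -/

import Mathlib

/-!
Each row of `U * A` is a linear combination of the rows of `A`, so by multilinearity of the
determinant every `i×i` minor of `U * A` is a combination of determinants of `i×i` row/column
selections of `A`. A selection with a repeated row or column has determinant `0`, and any other
one is, up to sign, a genuine minor after sorting. Hence `d_i(A)` divides every minor of `U * A`,
and, transposing, of `U * A * V`. So `d_i(A) ∣ d_i(U * A * V)`, and applying this to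
`U⁻¹ * (U * A * V) * V⁻¹ = A` gives the reverse divisibility.
-/

open Classical in
/-- The `i`-th determinant divisor of an integer matrix `A`: the greatest common divisor
(as a natural number) of all `i×i` minors of `A`, i.e. of the determinants of the `i×i`
submatrices obtained by selecting `i` rows via a strictly increasing map `Fin i → Fin m`
and `i` columns via a strictly increasing map `Fin i → Fin n`; by convention
`detDivisor A 0 = 1`. -/
noncomputable def detDivisor {m n : ℕ} (A : Matrix (Fin m) (Fin n) ℤ) : ℕ → ℕ
  | 0 => 1
  | (i + 1) =>
    (Finset.gcd
      (Finset.univ.filter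
        (fun p : (Fin (i + 1) → Fin m) × (Fin (i + 1) → Fin n) =>
          StrictMono p.1 ∧ StrictMono p.2))
      (fun p => (A.submatrix p.1 p.2).det)).natAbs

namespace Matrix

variable {R : Type*} [CommRing R] {d : R}

section Mul

variable {ι l m n : Type*} [Fintype ι] [DecidableEq ι] [Fintype m]

theorem dvd_det_submatrix_mul_left {A : Matrix m n R}
    (hA : ∀ (f : ι → m) (g : ι → n), d ∣ (A.submatrix f g).det)
    (U : Matrix l m R) (f : ι → l) (g : ι → n) :
    d ∣ ((U * A).submatrix f g).det := by
  have hrows : (U * A).submatrix f g = of fun j => ∑ k, U (f j) k • (A.submatrix id g) k := by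
    ext j c
    simp [mul_apply, Finset.sum_apply]
  rw [hrows]
  change d ∣ (detRowAlternating : (ι → R) [⋀^ι]→ₗ[R] R).toMultilinearMap
    (fun j => ∑ k, U (f j) k • A.submatrix id g k)
  rw [MultilinearMap.map_sum]
  refine Finset.dvd_sum fun p _ => ?_
  rw [MultilinearMap.map_smul_univ, smul_eq_mul]
  exact dvd_mul_of_dvd_right (hA p g) _

theorem dvd_det_submatrix_mul_right {A : Matrix l m R}
    (hA : ∀ (f : ι → l) (g : ι → m), d ∣ (A.submatrix f g).det)
    (V : Matrix m n R) (f : ι → l) (g : ι → n) :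
    d ∣ ((A * V).submatrix f g).det := by
  rw [← det_transpose, transpose_submatrix, transpose_mul]
  refine dvd_det_submatrix_mul_left (fun g f => ?_) Vᵀ g f
  rw [← transpose_submatrix, det_transpose]
  exact hA f g

end Mul

section Sorting

variable {α β : Type*} [LinearOrder α] {k : ℕ}

theorem dvd_det_submatrix_of_forall_strictMono_left {B : Matrix α β R} {g : Fin k → β}
    (hB : ∀ f : Fin k → α, StrictMono f → d ∣ (B.submatrix f g).det)
    (f : Fin k → α) : d ∣ (B.submatrix f g).det := by
  by_cases hf : Function.Injective f
  · have hsorted : StrictMono (f ∘ Tuple.sort f) :=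
      (Tuple.monotone_sort f).strictMono_of_injective (hf.comp (Tuple.sort f).injective)
    have hperm : B.submatrix f g =
        (B.submatrix (f ∘ Tuple.sort f) g).submatrix (Tuple.sort f).symm id := by
      ext j c
      simp
    rw [hperm, det_permute]
    exact dvd_mul_of_dvd_right (hB _ hsorted) _
  · obtain ⟨a, b, hab, hne⟩ := Function.not_injective_iff.mp hf
    rw [det_zero_of_row_eq hne (by ext c; simp [hab])]
    exact dvd_zero d

theorem dvd_det_submatrix_of_forall_strictMono {B : Matrix α β R} [LinearOrder β]
    (hB : ∀ (f : Fin k → α) (g : Fin k → β), StrictMono f → StrictMono g →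
      d ∣ (B.submatrix f g).det)
    (f : Fin k → α) (g : Fin k → β) : d ∣ (B.submatrix f g).det := by
  refine dvd_det_submatrix_of_forall_strictMono_left (fun r hr => ?_) f
  rw [← det_transpose, transpose_submatrix]
  refine dvd_det_submatrix_of_forall_strictMono_left (fun c hc => ?_) g
  rw [← transpose_submatrix, det_transpose]
  exact hB r c hr hc

end Sorting

end Matrix

open Matrix

theorem detDivisor_dvd_det_submatrix {m n : ℕ} (A : Matrix (Fin m) (Fin n) ℤ) (i : ℕ)
    (f : Fin i → Fin m) (g : Fin i → Fin n) :
    (detDivisor A i : ℤ) ∣ (A.submatrix f g).det := by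
  cases i with
  | zero => simp [detDivisor]
  | succ k =>
    refine dvd_det_submatrix_of_forall_strictMono (fun f g hf hg => ?_) f g
    rw [detDivisor, Int.natCast_natAbs, abs_dvd]
    exact Finset.gcd_dvd (b := (f, g)) (by simp [hf, hg])

theorem detDivisor_dvd_detDivisor_of_dvd_det_submatrix {m n m' n' : ℕ}
    {A : Matrix (Fin m) (Fin n) ℤ} {B : Matrix (Fin m') (Fin n') ℤ} {i : ℕ}
    (h : ∀ (f : Fin i → Fin m') (g : Fin i → Fin n'),
      (detDivisor A i : ℤ) ∣ (B.submatrix f g).det) :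
    detDivisor A i ∣ detDivisor B i := by
  cases i with
  | zero => simp [detDivisor]
  | succ k =>
    rw [detDivisor, detDivisor, Int.natAbs_dvd_natAbs]
    refine Finset.dvd_gcd fun p _ => ?_
    simpa only [detDivisor, Int.natCast_natAbs, abs_dvd] using h p.1 p.2

theorem detDivisor_dvd_detDivisor_mul_mul {m n m' n' : ℕ} (A : Matrix (Fin m) (Fin n) ℤ)
    (U : Matrix (Fin m') (Fin m) ℤ) (V : Matrix (Fin n) (Fin n') ℤ) (i : ℕ) :
    detDivisor A i ∣ detDivisor (U * A * V) i :=
  detDivisor_dvd_detDivisor_of_dvd_det_submatrix <| dvd_det_submatrix_mul_right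
    (dvd_det_submatrix_mul_left (detDivisor_dvd_det_submatrix A i) U) V

/-- Determinant divisors are invariant under multiplication by matrices
invertible over `ℤ`: if `U` is `m×m` unimodular and `V` is `n×n` unimodular, then
`d_i(U·A·V) = d_i(A)` for every `1 ≤ i ≤ min m n`. -/
theorem detDivisor_unimodular_invariance
    {m n : ℕ}
    (A : Matrix (Fin m) (Fin n) ℤ)
    (U : Matrix (Fin m) (Fin m) ℤ) (V : Matrix (Fin n) (Fin n) ℤ)
    (hU : IsUnit U.det) (hV : IsUnit V.det) :
    ∀ i : ℕ, 1 ≤ i → i ≤ min m n → detDivisor (U * A * V) i = detDivisor A i := by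
  intro i _ _
  have hA : U⁻¹ * (U * A * V) * V⁻¹ = A := by simp [Matrix.mul_assoc, hU, hV]
  refine Nat.dvd_antisymm ?_ (detDivisor_dvd_detDivisor_mul_mul A U V i)
  simpa only [hA] using detDivisor_dvd_detDivisor_mul_mul (U * A * V) U⁻¹ V⁻¹ i
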